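/- arXiv:1809.08533 — 5 statements merged into one kernel-verified Lean document; each statement's English description precedes it below -/
import Mathlib

section
/- For every integer n ≥ 0 and every ω ∈ [0, 2π), the density φ_{1,n}(ω′) = cos(nω′)/Ξ(ω′) satisfies K*[φ_{1,n}](ω) = (1/(2 e^{2nρ₀})) · cos(nω)/Ξ(ω); explicitly, (1/2π) ∫₀^{2π} (⟨x(ω) − x(ω′), ν(ω)⟩ / |x(ω) − x(ω′)|²) · cos(nω′) dω′ = cos(nω) / (2 e^{2nρ₀} Ξ(ω)). That is, φ_{1,n} is an eigenfunction of the Neumann–Poincaré operator of the ellipse with eigenvalue aₙ = 1/(2 e^{2nρ₀}). -/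
/-!
In elliptic coordinates the Neumann–Poincaré kernel of the ellipse is
`K(ω, ω') = sinh 2ρ₀ / (2 Ξ(ω) (cosh 2ρ₀ - cos (ω + ω')))`, on and off the diagonal.
Up to the factor `1 / (2 Ξ(ω))` this is the Poisson kernel of the unit disc with pole
`w = exp (-(2ρ₀ + iω))`, evaluated at `exp (iω')`. Poisson's formula for the holomorphic
function `z ↦ zⁿ`, after taking real parts, gives
`∫ P_w(exp (iω')) cos (nω') dω' = 2π Re wⁿ = 2π exp (-2nρ₀) cos (nω)`.
-/

open Real MeasureTheory

theorem continuous_poissonKernel_circleMap {w : ℂ} (hw : ‖w‖ ≠ 1) :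
    Continuous fun θ : ℝ => poissonKernel 0 w (circleMap 0 1 θ) := by
  simp only [poissonKernel_def, sub_zero]
  refine Continuous.div (by fun_prop) (by fun_prop) fun θ => ?_
  have : circleMap 0 1 θ ≠ w := fun h => by simp [← h] at hw
  exact pow_ne_zero 2 (norm_ne_zero_iff.2 (sub_ne_zero.2 this))

theorem re_circleMap_zero_one_pow (n : ℕ) (θ : ℝ) :
    (circleMap 0 1 θ ^ n).re = cos (n * θ) := by
  rw [circleMap_zero, Complex.ofReal_one, one_mul, ← Complex.exp_nat_mul, ← mul_assoc,
    ← Complex.ofReal_natCast, ← Complex.ofReal_mul, Complex.exp_ofReal_mul_I_re]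

theorem integral_poissonKernel_circleMap_mul_cos {w : ℂ} (hw : ‖w‖ < 1) (n : ℕ) :
    ∫ θ in 0..2 * π, poissonKernel 0 w (circleMap 0 1 θ) * cos (n * θ)
      = 2 * π * (w ^ n).re := by
  have hPoisson : circleAverage (fun z => poissonKernel 0 w z • z ^ n) 0 1 = w ^ n :=
    (differentiable_pow n).diffContOnCl.circleAverage_poissonKernel_smul (mem_ball_zero_iff.2 hw)
  have hint : IntervalIntegrable
      (fun θ => poissonKernel 0 w (circleMap 0 1 θ) • circleMap 0 1 θ ^ n) volume 0 (2 * π) :=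
    ((continuous_poissonKernel_circleMap hw.ne).smul (by fun_prop)).intervalIntegrable _ _
  rw [← hPoisson, circleAverage_def, Complex.smul_re, ← Complex.reCLM_apply,
    ← Complex.reCLM.intervalIntegral_comp_comm hint, smul_eq_mul, ← mul_assoc,
    mul_inv_cancel₀ (by positivity), one_mul]
  simp only [Complex.reCLM_apply, Complex.smul_re, re_circleMap_zero_one_pow,
    smul_eq_mul]

theorem poissonKernel_exp_neg_circleMap (a ω θ : ℝ) :
    poissonKernel 0 (Complex.exp (-(a + ω * Complex.I))) (circleMap 0 1 θ)
      = sinh a / (cosh a - cos (ω + θ)) := by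
  have hchord : ‖circleMap 0 1 θ - Complex.exp (-(a + ω * Complex.I))‖ ^ 2
      = 1 - 2 * exp (-a) * cos (ω + θ) + exp (-a) ^ 2 := by
    rw [← Complex.normSq_eq_norm_sq, Complex.normSq_apply]
    simp only [circleMap_zero, Complex.ofReal_one, one_mul, neg_add_rev, Complex.sub_re,
      Complex.sub_im, Complex.exp_re, Complex.exp_im, Complex.mul_re, Complex.mul_im,
      Complex.add_re, Complex.add_im, Complex.neg_re, Complex.neg_im, Complex.ofReal_re,
      Complex.ofReal_im, Complex.I_re, Complex.I_im, mul_zero, mul_one, sub_self, add_zero,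
      zero_add, neg_zero, exp_zero, cos_neg, sin_neg, mul_neg, sub_neg_eq_add, cos_add]
    linear_combination sin_sq_add_cos_sq θ + exp (-a) ^ 2 * sin_sq_add_cos_sq ω
  have hw : ‖Complex.exp (-(a + ω * Complex.I))‖ = exp (-a) := by simp [Complex.norm_exp]
  rw [poissonKernel_def, sub_zero, sub_zero, hchord, hw, norm_circleMap_zero, abs_one,
    sinh_eq, cosh_eq, exp_neg]
  field_simp
  ring

theorem ellipse_chord_sq (R ρ ω ω' : ℝ) :
    (R * cos ω * cosh ρ - R * cos ω' * cosh ρ) ^ 2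
        + (R * sin ω * sinh ρ - R * sin ω' * sinh ρ) ^ 2
      = R ^ 2 * (1 - cos (ω - ω')) * (cosh (2 * ρ) - cos (ω + ω')) := by
  rw [cos_sub, cos_add, cosh_two_mul]
  linear_combination R ^ 2 * ((cosh ρ ^ 2 + sin ω' ^ 2 - 1) * sin_sq_add_cos_sq ω
    + (cosh ρ ^ 2 - cos ω ^ 2) * sin_sq_add_cos_sq ω'
    - (sin ω ^ 2 + sin ω' ^ 2 - 1 + cos ω * cos ω' - sin ω * sin ω') * cosh_sq ρ)

theorem ellipse_chord_inner_normal (R ρ ω ω' : ℝ) :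
    (R * cos ω * cosh ρ - R * cos ω' * cosh ρ) * (R * cos ω * sinh ρ)
        + (R * sin ω * sinh ρ - R * sin ω' * sinh ρ) * (R * sin ω * cosh ρ)
      = R ^ 2 * (1 - cos (ω - ω')) * (sinh (2 * ρ) / 2) := by
  rw [cos_sub, sinh_two_mul]
  linear_combination R ^ 2 * sinh ρ * cosh ρ * sin_sq_add_cos_sq ω

theorem ellipse_npKernel_eq {R ρ : ℝ} (hR : R ≠ 0) (hρ : ρ ≠ 0)
    {x₁ x₂ Ξ ν₁ ν₂ : ℝ → ℝ} {K : ℝ → ℝ → ℝ}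
    (hx₁ : x₁ = fun ω => R * cos ω * cosh ρ)
    (hx₂ : x₂ = fun ω => R * sin ω * sinh ρ)
    (hΞ : Ξ = fun ω => R * √(sinh ρ ^ 2 + sin ω ^ 2))
    (hν₁ : ν₁ = fun ω => R * cos ω * sinh ρ / Ξ ω)
    (hν₂ : ν₂ = fun ω => R * sin ω * cosh ρ / Ξ ω)
    (hK : K = fun ω ω' =>
      if (x₁ ω', x₂ ω') = (x₁ ω, x₂ ω) then
        (x₁ ω * ν₁ ω + x₂ ω * ν₂ ω) / (2 * (Ξ ω) ^ 2)
      else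
        ((x₁ ω - x₁ ω') * ν₁ ω + (x₂ ω - x₂ ω') * ν₂ ω) /
          ((x₁ ω - x₁ ω') ^ 2 + (x₂ ω - x₂ ω') ^ 2))
    (ω ω' : ℝ) :
    K ω ω' = sinh (2 * ρ) / (2 * Ξ ω * (cosh (2 * ρ) - cos (ω + ω'))) := by
  subst hx₁ hx₂ hν₁ hν₂ hK
  dsimp only
  split_ifs with hdiag
  · obtain ⟨hc, hs⟩ : cos ω' = cos ω ∧ sin ω' = sin ω := by
      simpa only [Prod.mk.injEq, mul_left_inj' (cosh_pos ρ).ne',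
        mul_left_inj' (sinh_ne_zero.2 hρ), mul_right_inj' hR] using hdiag
    have hpos : 0 < sinh ρ ^ 2 + sin ω ^ 2 := by positivity
    have hΞsq : Ξ ω ^ 2 = R ^ 2 * (sinh ρ ^ 2 + sin ω ^ 2) := by
      rw [hΞ, mul_pow, sq_sqrt hpos.le]
    have hΞne : Ξ ω ≠ 0 := by rw [hΞ]; exact mul_ne_zero hR (sqrt_pos.2 hpos).ne'
    have hden : cosh (2 * ρ) - cos (ω + ω') = 2 * (sinh ρ ^ 2 + sin ω ^ 2) := by
      rw [cos_add, hc, hs, cosh_two_mul]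
      linear_combination cosh_sq ρ - sin_sq_add_cos_sq ω
    rw [hden, sinh_two_mul]
    field_simp
    linear_combination R ^ 2 * (sinh ρ ^ 2 + sin ω ^ 2) * sin_sq_add_cos_sq ω - hΞsq
  · have hne : R ^ 2 * (1 - cos (ω - ω')) * (cosh (2 * ρ) - cos (ω + ω')) ≠ 0 := by
      rw [← ellipse_chord_sq]
      intro h
      obtain ⟨h₁, h₂⟩ := (add_eq_zero_iff_of_nonneg (sq_nonneg _) (sq_nonneg _)).1 h
      exact hdiag (Prod.ext (sub_eq_zero.1 (pow_eq_zero_iff two_ne_zero |>.1 h₁)).symm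
        (sub_eq_zero.1 (pow_eq_zero_iff two_ne_zero |>.1 h₂)).symm)
    obtain ⟨⟨-, hδ⟩, hσ⟩ := And.imp_left mul_ne_zero_iff.1 (mul_ne_zero_iff.1 hne)
    rw [mul_div_assoc', mul_div_assoc', ← add_div, ellipse_chord_inner_normal,
      ellipse_chord_sq]
    field_simp

theorem re_exp_neg_pow (a ω : ℝ) (n : ℕ) :
    (Complex.exp (-(a + ω * Complex.I)) ^ n).re = exp (-(n * a)) * cos (n * ω) := by
  rw [← Complex.exp_nat_mul, Complex.exp_re]
  simp

/-- For every integer n ≥ 0 and every ω ∈ [0, 2π), the density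
φ_{1,n}(ω′) = cos(nω′)/Ξ(ω′) is a Neumann–Poincaré eigenfunction of the ellipse
with eigenvalue aₙ = 1/(2 e^{2nρ₀}); explicitly
(1/2π) ∫₀^{2π} (⟨x(ω)−x(ω′), ν(ω)⟩/|x(ω)−x(ω′)|²) cos(nω′) dω′
  = cos(nω)/(2 e^{2nρ₀} Ξ(ω)). -/
theorem NP_eigenfunction_ellipse_cos (R₀ ρ₀ : ℝ) (hR : 0 < R₀) (hρ : 0 < ρ₀)
    (x₁ x₂ Ξ ν₁ ν₂ : ℝ → ℝ)
    (hx₁ : x₁ = fun ω => R₀ * Real.cos ω * Real.cosh ρ₀)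
    (hx₂ : x₂ = fun ω => R₀ * Real.sin ω * Real.sinh ρ₀)
    (hΞ : Ξ = fun ω => R₀ * Real.sqrt ((Real.sinh ρ₀) ^ 2 + (Real.sin ω) ^ 2))
    (hν₁ : ν₁ = fun ω => R₀ * Real.cos ω * Real.sinh ρ₀ / Ξ ω)
    (hν₂ : ν₂ = fun ω => R₀ * Real.sin ω * Real.cosh ρ₀ / Ξ ω)
    -- the Neumann–Poincaré kernel of the ellipse, extended at the removable
    -- singularity ω′ = ω by its limiting value −⟨x″(ω), ν(ω)⟩/(2|x′(ω)|²),
    -- where x″(ω) = −x(ω)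
    (K : ℝ → ℝ → ℝ)
    (hK : K = fun ω ω' =>
      if (x₁ ω', x₂ ω') = (x₁ ω, x₂ ω) then
        (x₁ ω * ν₁ ω + x₂ ω * ν₂ ω) / (2 * (Ξ ω) ^ 2)
      else
        ((x₁ ω - x₁ ω') * ν₁ ω + (x₂ ω - x₂ ω') * ν₂ ω) /
          ((x₁ ω - x₁ ω') ^ 2 + (x₂ ω - x₂ ω') ^ 2)) :
    ∀ n : ℕ, ∀ ω ∈ Set.Ico (0 : ℝ) (2 * Real.pi),
      (1 / (2 * Real.pi)) *
          ∫ ω' in (0 : ℝ)..(2 * Real.pi), K ω ω' * Real.cos ((n : ℝ) * ω')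
        = Real.cos ((n : ℝ) * ω) / (2 * Real.exp (2 * (n : ℝ) * ρ₀) * Ξ ω) := by
  intro n ω _
  have hw : ‖Complex.exp (-((2 * ρ₀ : ℝ) + ω * Complex.I))‖ < 1 := by
    simpa [Complex.norm_exp] using hρ
  have hintegrand : ∀ ω', K ω ω' * cos (n * ω') = (2 * Ξ ω)⁻¹ *
      (poissonKernel 0 (Complex.exp (-((2 * ρ₀ : ℝ) + ω * Complex.I))) (circleMap 0 1 ω')
        * cos (n * ω')) := fun ω' => by
    rw [ellipse_npKernel_eq hR.ne' hρ.ne' hx₁ hx₂ hΞ hν₁ hν₂ hK,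
      poissonKernel_exp_neg_circleMap]
    simp only [div_eq_mul_inv, mul_inv]
    ring
  rw [intervalIntegral.integral_congr fun ω' _ => hintegrand ω',
    intervalIntegral.integral_const_mul,
    integral_poissonKernel_circleMap_mul_cos hw, re_exp_neg_pow, exp_neg]
  field_simp
end

section
/- Let n ≥ 1 be an integer and let y ∈ ℝ² have elliptic coordinates (ρ, ω) with 0 < ρ < ρ₀ (y inside the ellipse). Then (1/2π) ∫₀^{2π} ln|y − x(ω′)| · cos(nω′) dω′ = −((e^{nρ} + e^{−nρ}) / (2n e^{nρ₀})) · cos(nω). That is, the single-layer potential of the density φ_{1,n}(ω′) = cos(nω′)/Ξ(ω′) with respect to arc length equals −((e^{nρ} + e^{−nρ})/(2n e^{nρ₀})) cos(nω) inside the ellipse. -/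
/-!
In the complex coordinate `x + i y` the point with elliptic coordinates `(ρ, ω)` is
`R₀ cosh (ρ + i ω)`. The identity `2 (cosh w - cosh z) = e^w (1 - e^{z-w}) (1 - e^{-z-w})`
factors the distance from `y = R₀ cosh ζ` to the boundary point `x(t) = R₀ cosh (ρ₀ + i t)` as
`(R₀ e^{ρ₀} / 2) |1 - A e^{-it}| |1 - B e^{-it}|` with `A = e^{ζ - ρ₀}`, `B = e^{-ζ - ρ₀}`,
both of modulus `< 1` when `0 < ρ < ρ₀`. Expanding `log |1 - a e^{-it}| = -Re ∑ aᵏ e^{-ikt} / k`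
and integrating termwise against `cos (n t)` leaves only `-π Re (aⁿ) / n`, and
`Re (Aⁿ + Bⁿ) = (e^{nρ} + e^{-nρ}) e^{-nρ₀} cos (n ω)`.
-/

open Complex MeasureTheory intervalIntegral
open scoped Real

theorem integral_cexp_int_mul_mul_I (m : ℤ) :
    ∫ θ in (0 : ℝ)..2 * π, cexp (m * θ * I) = if m = 0 then 2 * π else 0 := by
  split_ifs with hm
  · simp [hm]
  have hc : (m * I : ℂ) ≠ 0 := mul_ne_zero (Int.cast_ne_zero.mpr hm) I_ne_zero
  simp_rw [mul_right_comm _ _ I]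
  rw [integral_exp_mul_complex hc, show (m * I * ((2 * π : ℝ) : ℂ)) = m * (2 * π * I) by
    push_cast; ring, exp_int_mul_two_pi_mul_I]
  simp

theorem integral_cexp_neg_nat_mul_mul_I_mul_cos {n : ℕ} (hn : n ≠ 0) (k : ℕ) :
    ∫ θ in (0 : ℝ)..2 * π, cexp (-(k * θ * I)) * Real.cos (n * θ)
      = if k = n then (π : ℂ) else 0 := by
  have hsplit (θ : ℝ) : cexp (-(k * θ * I)) * Real.cos (n * θ)
      = (cexp (((n - k : ℤ) : ℂ) * θ * I) + cexp (((-(n + k) : ℤ) : ℂ) * θ * I)) / 2 := by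
    rw [ofReal_cos, cos, mul_div_assoc', mul_add, ← exp_add, ← exp_add]
    push_cast
    ring_nf
  simp_rw [hsplit]
  rw [intervalIntegral.integral_div,
    integral_add (Continuous.intervalIntegrable (by fun_prop) _ _)
      (Continuous.intervalIntegrable (by fun_prop) _ _),
    integral_cexp_int_mul_mul_I, integral_cexp_int_mul_mul_I,
    if_neg (c := -((n : ℤ) + k) = 0) (by omega)]
  rcases eq_or_ne k n with rfl | hkn
  · simp
  · rw [if_neg (by omega), if_neg hkn]
    simp

theorem integral_cos_nat_mul {n : ℕ} (hn : n ≠ 0) :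
    ∫ θ in (0 : ℝ)..2 * π, Real.cos (n * θ) = 0 := by
  rw [intervalIntegral.integral_comp_mul_left (fun x ↦ Real.cos x) (Nat.cast_ne_zero.mpr hn),
    integral_cos, mul_zero, Real.sin_zero, sub_zero,
    show (n : ℝ) * (2 * π) = (2 * n : ℕ) * π by push_cast; ring, Real.sin_nat_mul_pi, smul_zero]

theorem norm_mul_cexp_neg_mul_I (a : ℂ) (θ : ℝ) : ‖a * cexp (-(θ * I))‖ = ‖a‖ := by
  rw [norm_mul, ← neg_mul, ← ofReal_neg, norm_exp_ofReal_mul_I, mul_one]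

theorem norm_pow_div_natCast_mul_cos_le (z : ℂ) (k : ℕ) (x : ℝ) :
    ‖z ^ k / k * Real.cos x‖ ≤ ‖z‖ ^ k := by
  rcases k.eq_zero_or_pos with rfl | hk
  · simp
  calc ‖z ^ k / k * Real.cos x‖ ≤ ‖z‖ ^ k / k * 1 := by
        rw [norm_mul, norm_div, norm_pow, norm_natCast, norm_real]
        gcongr
        exact Real.abs_cos_le_one x
    _ ≤ ‖z‖ ^ k := by
        rw [mul_one]
        exact div_le_self (by positivity) (by exact_mod_cast hk)

theorem integral_log_one_sub_mul_cexp_mul_cos {a : ℂ} (ha : ‖a‖ < 1) {n : ℕ} (hn : n ≠ 0) :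
    ∫ θ in (0 : ℝ)..2 * π, log (1 - a * cexp (-(θ * I))) * Real.cos (n * θ)
      = -(π * a ^ n / n) := by
  have hterm (k : ℕ) :
      ∫ θ in (0 : ℝ)..2 * π, (a * cexp (-(θ * I))) ^ k / k * Real.cos (n * θ)
        = if k = n then π * a ^ n / n else 0 := by
    have hfactor (θ : ℝ) : (a * cexp (-(θ * I))) ^ k / k * Real.cos (n * θ)
        = a ^ k / k * (cexp (-(k * θ * I)) * Real.cos (n * θ)) := by
      rw [mul_pow, ← exp_nat_mul]
      ring_nf
    simp_rw [hfactor]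
    rw [intervalIntegral.integral_const_mul, integral_cexp_neg_nat_mul_mul_I_mul_cos hn]
    split_ifs with hk
    · subst hk; ring
    · simp
  -- Termwise integration of `-log (1 - z) = ∑ zᵏ / k`, dominated by the geometric series `‖a‖ᵏ`.
  have hsum : HasSum
      (fun k : ℕ ↦ ∫ θ in (0 : ℝ)..2 * π, (a * cexp (-(θ * I))) ^ k / k * Real.cos (n * θ))
      (∫ θ in (0 : ℝ)..2 * π, -log (1 - a * cexp (-(θ * I))) * Real.cos (n * θ)) :=
    hasSum_integral_of_dominated_convergence (fun k _ ↦ ‖a‖ ^ k)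
      (fun k ↦ (Continuous.aestronglyMeasurable (by fun_prop)))
      (fun k ↦ ae_of_all _ fun θ _ ↦ norm_mul_cexp_neg_mul_I a θ ▸
        norm_pow_div_natCast_mul_cos_le _ k _)
      (ae_of_all _ fun _ _ ↦ summable_geometric_of_lt_one (norm_nonneg a) ha)
      intervalIntegrable_const
      (ae_of_all _ fun θ _ ↦ (hasSum_taylorSeries_neg_log
        ((norm_mul_cexp_neg_mul_I a θ).trans_lt ha)).mul_right _)
  simp_rw [hterm, neg_mul, intervalIntegral.integral_neg] at hsum
  rw [(hasSum_ite_eq n _).unique hsum, neg_neg]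

theorem integral_log_norm_one_sub_mul_cexp_mul_cos {a : ℂ} (ha : ‖a‖ < 1) {n : ℕ}
    (hn : n ≠ 0) :
    ∫ θ in (0 : ℝ)..2 * π, Real.log ‖1 - a * cexp (-(θ * I))‖ * Real.cos (n * θ)
      = -(π * (a ^ n).re / n) := by
  have hslit (θ : ℝ) : 1 - a * cexp (-(θ * I)) ∈ slitPlane := by
    rw [sub_eq_add_neg]
    exact mem_slitPlane_of_norm_lt_one (by rwa [norm_neg, norm_mul_cexp_neg_mul_I])
  have hcont : Continuous fun θ : ℝ ↦ log (1 - a * cexp (-(θ * I))) * Real.cos (n * θ) :=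
    ((by fun_prop : Continuous fun θ : ℝ ↦ 1 - a * cexp (-(θ * I))).clog hslit).mul
      (by fun_prop)
  have hre (θ : ℝ) : Real.log ‖1 - a * cexp (-(θ * I))‖ * Real.cos (n * θ)
      = reCLM (log (1 - a * cexp (-(θ * I))) * Real.cos (n * θ)) := by
    rw [reCLM_apply, re_mul_ofReal, log_re]
  simp_rw [hre]
  rw [reCLM.intervalIntegral_comp_comm (hcont.intervalIntegrable _ _), reCLM_apply,
    integral_log_one_sub_mul_cexp_mul_cos ha hn]
  simp [div_natCast_re]

theorem integral_log_mul_norm_mul_norm_mul_cos {c : ℝ} (hc : c ≠ 0) {a b : ℂ} (ha : ‖a‖ < 1)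
    (hb : ‖b‖ < 1) {n : ℕ} (hn : n ≠ 0) :
    ∫ θ in (0 : ℝ)..2 * π,
        Real.log (c * ‖1 - a * cexp (-(θ * I))‖ * ‖1 - b * cexp (-(θ * I))‖) * Real.cos (n * θ)
      = -(π * (a ^ n + b ^ n).re / n) := by
  have hne {a : ℂ} (ha : ‖a‖ < 1) (θ : ℝ) : ‖1 - a * cexp (-(θ * I))‖ ≠ 0 := by
    rw [norm_ne_zero_iff, sub_ne_zero]
    intro h
    have := norm_mul_cexp_neg_mul_I a θ
    rw [← h, norm_one] at this
    linarith
  have hint {a : ℂ} (ha : ‖a‖ < 1) : IntervalIntegrable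
      (fun θ : ℝ ↦ Real.log ‖1 - a * cexp (-(θ * I))‖ * Real.cos (n * θ)) volume 0 (2 * π) :=
    (((by fun_prop : Continuous fun θ : ℝ ↦ ‖1 - a * cexp (-(θ * I))‖).log (hne ha)).mul
      (by fun_prop)).intervalIntegrable _ _
  have hsplit (θ : ℝ) :
      Real.log (c * ‖1 - a * cexp (-(θ * I))‖ * ‖1 - b * cexp (-(θ * I))‖) * Real.cos (n * θ)
        = Real.log c * Real.cos (n * θ)
          + (Real.log ‖1 - a * cexp (-(θ * I))‖ * Real.cos (n * θ)
            + Real.log ‖1 - b * cexp (-(θ * I))‖ * Real.cos (n * θ)) := by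
    rw [Real.log_mul (mul_ne_zero hc (hne ha θ)) (hne hb θ), Real.log_mul hc (hne ha θ)]
    ring
  simp_rw [hsplit]
  rw [intervalIntegral.integral_add (Continuous.intervalIntegrable (by fun_prop) _ _)
      ((hint ha).add (hint hb)),
    intervalIntegral.integral_add (hint ha) (hint hb),
    intervalIntegral.integral_const_mul, integral_cos_nat_mul hn,
    integral_log_norm_one_sub_mul_cexp_mul_cos ha hn,
    integral_log_norm_one_sub_mul_cexp_mul_cos hb hn, add_re]
  ring

theorem Complex.cosh_add_mul_I (x y : ℝ) :
    cosh (x + y * I) = Real.cosh x * Real.cos y + Real.sinh x * Real.sin y * I := by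
  rw [cosh_add, cosh_mul_I, sinh_mul_I]
  push_cast
  ring

theorem Complex.two_mul_cosh_sub_cosh (z w : ℂ) :
    2 * (cosh w - cosh z) = exp w * (1 - exp (z - w)) * (1 - exp (-z - w)) := by
  simp only [cosh, exp_sub, exp_neg]
  field_simp
  ring

theorem Complex.norm_cosh_sub_cosh_add_mul_I (z : ℂ) (ρ t : ℝ) :
    ‖cosh z - cosh (ρ + t * I)‖ = Real.exp ρ / 2 * ‖1 - exp (z - ρ) * exp (-(t * I))‖
      * ‖1 - exp (-z - ρ) * exp (-(t * I))‖ := by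
  have hshift (u : ℂ) : exp (u - (ρ + t * I)) = exp (u - ρ) * exp (-(t * I)) := by
    rw [← exp_add]
    ring_nf
  calc ‖cosh z - cosh (ρ + t * I)‖ = ‖2 * (cosh (ρ + t * I) - cosh z)‖ / 2 := by
        rw [norm_mul, norm_sub_rev, Complex.norm_ofNat]
        ring
    _ = _ := by
        rw [two_mul_cosh_sub_cosh, hshift, hshift, norm_mul, norm_mul, norm_exp]
        simp only [add_re, ofReal_re, mul_re, I_re, I_im, ofReal_im, mul_zero, mul_one, sub_zero,
          add_zero]
        ring

theorem sqrt_elliptic_sq_add_sq_eq_mul_norm_cosh_sub_cosh (R ρ ω ρ' ω' : ℝ) (hR : 0 ≤ R) :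
    √((R * Real.cos ω * Real.cosh ρ - R * Real.cos ω' * Real.cosh ρ') ^ 2
        + (R * Real.sin ω * Real.sinh ρ - R * Real.sin ω' * Real.sinh ρ') ^ 2)
      = R * ‖cosh (ρ + ω * I) - cosh (ρ' + ω' * I)‖ := by
  calc _ = dist (R * cosh (ρ + ω * I)) (R * cosh (ρ' + ω' * I)) := by
        rw [dist_eq_re_im, cosh_add_mul_I, cosh_add_mul_I]
        simp only [mul_re, mul_im, add_re, add_im, ofReal_re, ofReal_im, I_re, I_im]
        ring_nf
    _ = R * ‖cosh (ρ + ω * I) - cosh (ρ' + ω' * I)‖ := by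
        rw [dist_eq_norm, ← mul_sub, norm_mul, norm_real, Real.norm_of_nonneg hR]

theorem singleLayer_ellipse_cos_inside_general (R₀ ρ₀ : ℝ) (hR : 0 < R₀)
    (n : ℕ) (hn : 1 ≤ n)
    (ρ ω : ℝ) (hρ : 0 < ρ) (hρlt : ρ < ρ₀)
    (y₁ y₂ : ℝ)
    (hy₁ : y₁ = R₀ * Real.cos ω * Real.cosh ρ)
    (hy₂ : y₂ = R₀ * Real.sin ω * Real.sinh ρ) :
    (1 / (2 * Real.pi)) *
        ∫ ω' in (0 : ℝ)..(2 * Real.pi),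
          Real.log (Real.sqrt ((y₁ - R₀ * Real.cos ω' * Real.cosh ρ₀) ^ 2 +
            (y₂ - R₀ * Real.sin ω' * Real.sinh ρ₀) ^ 2)) * Real.cos ((n : ℝ) * ω')
      = -((Real.exp ((n : ℝ) * ρ) + Real.exp (-((n : ℝ) * ρ))) /
            (2 * (n : ℝ) * Real.exp ((n : ℝ) * ρ₀))) * Real.cos ((n : ℝ) * ω) := by
  subst hy₁ hy₂
  set ζ : ℂ := ρ + ω * I
  have hdist (t : ℝ) : √((R₀ * Real.cos ω * Real.cosh ρ - R₀ * Real.cos t * Real.cosh ρ₀) ^ 2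
        + (R₀ * Real.sin ω * Real.sinh ρ - R₀ * Real.sin t * Real.sinh ρ₀) ^ 2)
      = R₀ * Real.exp ρ₀ / 2 * ‖1 - cexp (ζ - ρ₀) * cexp (-(t * I))‖
        * ‖1 - cexp (-ζ - ρ₀) * cexp (-(t * I))‖ := by
    rw [sqrt_elliptic_sq_add_sq_eq_mul_norm_cosh_sub_cosh _ _ _ _ _ hR.le,
      norm_cosh_sub_cosh_add_mul_I]
    ring
  have hA : ‖cexp (ζ - ρ₀)‖ < 1 := by
    simpa [norm_exp, ζ] using hρlt
  have hB : ‖cexp (-ζ - ρ₀)‖ < 1 := by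
    simpa [norm_exp, ζ] using (by linarith : -ρ - ρ₀ < 0)
  have hre : (cexp (ζ - ρ₀) ^ n + cexp (-ζ - ρ₀) ^ n).re
      = (Real.exp (n * ρ) + Real.exp (-(n * ρ))) / Real.exp (n * ρ₀) * Real.cos (n * ω) := by
    simp only [← exp_nat_mul, add_re, exp_re, mul_re, natCast_re, natCast_im, sub_re, sub_im,
      add_im, neg_re, neg_im, ofReal_re, ofReal_im, I_re, I_im, mul_im, ζ]
    simp only [mul_zero, mul_one, sub_zero, add_zero, zero_add, zero_mul, sub_self, neg_zero,
      mul_neg, Real.cos_neg, mul_sub, Real.exp_sub]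
    ring
  simp_rw [hdist]
  rw [integral_log_mul_norm_mul_norm_mul_cos (by positivity) hA hB (by omega), hre]
  field_simp

/-- For n ≥ 1 and a point y with elliptic coordinates (ρ, ω),
0 < ρ < ρ₀ (inside the ellipse),
(1/2π) ∫₀^{2π} ln|y − x(ω′)| cos(nω′) dω′
  = −((e^{nρ} + e^{−nρ})/(2n e^{nρ₀})) cos(nω). -/
theorem singleLayer_ellipse_cos_inside (R₀ ρ₀ : ℝ) (hR : 0 < R₀) (hρ₀ : 0 < ρ₀)
    (n : ℕ) (hn : 1 ≤ n)
    (ρ ω : ℝ) (hρ : 0 < ρ) (hρlt : ρ < ρ₀) (hω : ω ∈ Set.Ico (0 : ℝ) (2 * Real.pi))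
    (y₁ y₂ : ℝ)
    (hy₁ : y₁ = R₀ * Real.cos ω * Real.cosh ρ)
    (hy₂ : y₂ = R₀ * Real.sin ω * Real.sinh ρ) :
    (1 / (2 * Real.pi)) *
        ∫ ω' in (0 : ℝ)..(2 * Real.pi),
          Real.log (Real.sqrt ((y₁ - R₀ * Real.cos ω' * Real.cosh ρ₀) ^ 2 +
            (y₂ - R₀ * Real.sin ω' * Real.sinh ρ₀) ^ 2)) * Real.cos ((n : ℝ) * ω')
      = -((Real.exp ((n : ℝ) * ρ) + Real.exp (-((n : ℝ) * ρ))) /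
            (2 * (n : ℝ) * Real.exp ((n : ℝ) * ρ₀))) * Real.cos ((n : ℝ) * ω) :=
  singleLayer_ellipse_cos_inside_general R₀ ρ₀ hR n hn ρ ω hρ hρlt y₁ y₂ hy₁ hy₂
end

section
/- Let n ≥ 1 be an integer and let y ∈ ℝ² have elliptic coordinates (ρ, ω) with ρ > ρ₀ (y outside the ellipse). Then (1/2π) ∫₀^{2π} ln|y − x(ω′)| · cos(nω′) dω′ = −((e^{nρ₀} + e^{−nρ₀}) / (2n e^{nρ})) · cos(nω). That is, the single-layer potential of the density φ_{1,n}(ω′) = cos(nω′)/Ξ(ω′) with respect to arc length equals −((e^{nρ₀} + e^{−nρ₀})/(2n e^{nρ})) cos(nω) outside the ellipse. -/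
/-!
In complex notation the ellipse is `t ↦ R₀ cosh (ρ₀ + t i)` and `y = R₀ cosh (ρ + ω i)`, and
`cosh ζ - cosh ζ' = (e^ζ / 2) (1 - e^{ζ' - ζ}) (1 - e^{-ζ - ζ'})`. Outside the ellipse both
exponentials have modulus `< 1`, so `log |y - x(t)|` is a constant plus two terms
`log |1 - q e^{it}| = -∑_{k ≥ 1} Re (q^k e^{ikt}) / k`, the second one after complex conjugation.
Integrating these absolutely convergent series against `cos (n t)` term by term leaves only
`-π Re (q^n) / n` from each, and the two values of `q^n` give `e^{±nρ₀} e^{-nρ} e^{inω}`.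
-/
open Real MeasureTheory Complex ComplexConjugate

theorem integral_cos_int_mul_eq_zero {m : ℤ} (hm : m ≠ 0) :
    ∫ t in (0 : ℝ)..2 * π, Real.cos (m * t) = 0 := by
  have hm' : (m : ℝ) ≠ 0 := Int.cast_ne_zero.mpr hm
  rw [intervalIntegral.integral_comp_mul_left _ hm', integral_cos, mul_zero, Real.sin_zero,
    Real.sin_periodic.int_mul_eq, Real.sin_zero, sub_zero, smul_zero]

theorem integral_sin_int_mul_eq_zero (m : ℤ) :
    ∫ t in (0 : ℝ)..2 * π, Real.sin (m * t) = 0 := by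
  rcases eq_or_ne m 0 with rfl | hm
  · simp
  have hm' : (m : ℝ) ≠ 0 := Int.cast_ne_zero.mpr hm
  rw [intervalIntegral.integral_comp_mul_left _ hm', integral_sin, mul_zero, Real.cos_zero,
    Real.cos_int_mul_two_pi, sub_self, smul_zero]

theorem integral_cos_nat_mul_mul_cos_nat_mul (k : ℕ) {n : ℕ} (hn : n ≠ 0) :
    ∫ t in (0 : ℝ)..2 * π, Real.cos (k * t) * Real.cos (n * t) = if k = n then π else 0 := by
  have hprod : ∀ t : ℝ, Real.cos (k * t) * Real.cos (n * t) =
      Real.cos (((k + n : ℤ) : ℝ) * t) / 2 + Real.cos (((k - n : ℤ) : ℝ) * t) / 2 := by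
    intro t
    push_cast
    rw [add_mul, sub_mul, Real.cos_add, Real.cos_sub]
    ring
  have hint : ∀ m : ℤ, IntervalIntegrable (fun t : ℝ => Real.cos (m * t) / 2) volume 0 (2 * π) :=
    fun m => (by fun_prop : Continuous fun t : ℝ => Real.cos (m * t) / 2).intervalIntegrable _ _
  simp_rw [hprod]
  rw [intervalIntegral.integral_add (hint _) (hint _), intervalIntegral.integral_div,
    intervalIntegral.integral_div, integral_cos_int_mul_eq_zero (by omega)]
  split_ifs with hkn
  · simp [hkn]
  · rw [integral_cos_int_mul_eq_zero (by omega)]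
    simp

theorem integral_sin_nat_mul_mul_cos_nat_mul (k n : ℕ) :
    ∫ t in (0 : ℝ)..2 * π, Real.sin (k * t) * Real.cos (n * t) = 0 := by
  have hprod : ∀ t : ℝ, Real.sin (k * t) * Real.cos (n * t) =
      Real.sin (((k + n : ℤ) : ℝ) * t) / 2 + Real.sin (((k - n : ℤ) : ℝ) * t) / 2 := by
    intro t
    push_cast
    rw [add_mul, sub_mul, Real.sin_add, Real.sin_sub]
    ring
  have hint : ∀ m : ℤ, IntervalIntegrable (fun t : ℝ => Real.sin (m * t) / 2) volume 0 (2 * π) :=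
    fun m => (by fun_prop : Continuous fun t : ℝ => Real.sin (m * t) / 2).intervalIntegrable _ _
  simp_rw [hprod]
  rw [intervalIntegral.integral_add (hint _) (hint _), intervalIntegral.integral_div,
    intervalIntegral.integral_div, integral_sin_int_mul_eq_zero, integral_sin_int_mul_eq_zero]
  simp

-- The `k = 0` term is `Re 1 / 0 = 0`.
theorem Complex.hasSum_re_pow_div_neg_log_norm_one_sub {z : ℂ} (hz : ‖z‖ < 1) :
    HasSum (fun k : ℕ => (z ^ k).re / k) (-Real.log ‖1 - z‖) := by
  simpa [Complex.log_re] using Complex.hasSum_re (hasSum_taylorSeries_neg_log hz)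

theorem Complex.re_mul_exp_ofReal_mul_I_pow (q : ℂ) (t : ℝ) (k : ℕ) :
    ((q * exp (t * I)) ^ k).re = (q ^ k).re * Real.cos (k * t) - (q ^ k).im * Real.sin (k * t) := by
  rw [mul_pow, ← Complex.exp_nat_mul, ← mul_assoc, ← ofReal_natCast, ← ofReal_mul, exp_mul_I]
  simp only [mul_re, add_re, mul_im, add_im, cos_ofReal_re, sin_ofReal_re, cos_ofReal_im,
    sin_ofReal_im, I_re, I_im]
  ring

theorem integral_re_mul_exp_ofReal_mul_I_pow_div_mul_cos (q : ℂ) (k : ℕ) {n : ℕ} (hn : n ≠ 0) :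
    ∫ t in (0 : ℝ)..2 * π, ((q * exp (t * I)) ^ k).re / k * Real.cos (n * t) =
      if k = n then π * (q ^ n).re / n else 0 := by
  have hint : ∀ f : ℝ → ℝ, Continuous f →
      IntervalIntegrable (fun t => f (k * t) * Real.cos (n * t)) volume 0 (2 * π) :=
    fun f hf => (by fun_prop : Continuous _).intervalIntegrable _ _
  have hexpand : ∀ t : ℝ, ((q * exp (t * I)) ^ k).re / k * Real.cos (n * t) =
      (q ^ k).re / k * (Real.cos (k * t) * Real.cos (n * t)) -
        (q ^ k).im / k * (Real.sin (k * t) * Real.cos (n * t)) := by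
    intro t
    rw [Complex.re_mul_exp_ofReal_mul_I_pow]
    ring
  simp_rw [hexpand]
  rw [intervalIntegral.integral_sub ((hint _ continuous_cos).const_mul _)
      ((hint _ continuous_sin).const_mul _),
    intervalIntegral.integral_const_mul, intervalIntegral.integral_const_mul,
    integral_cos_nat_mul_mul_cos_nat_mul k hn, integral_sin_nat_mul_mul_cos_nat_mul]
  split_ifs with hkn
  · subst hkn
    ring
  · simp

theorem Complex.norm_mul_exp_ofReal_mul_I (q : ℂ) (t : ℝ) : ‖q * exp (t * I)‖ = ‖q‖ := by
  rw [norm_mul, norm_exp_ofReal_mul_I, mul_one]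

theorem Complex.one_sub_mul_exp_ofReal_mul_I_ne_zero {q : ℂ} (hq : ‖q‖ < 1) (t : ℝ) :
    1 - q * exp (t * I) ≠ 0 := by
  rw [sub_ne_zero]
  intro h
  have := Complex.norm_mul_exp_ofReal_mul_I q t
  rw [← h, norm_one] at this
  linarith

theorem integral_log_norm_one_sub_mul_exp_ofReal_mul_I_mul_cos {q : ℂ} (hq : ‖q‖ < 1) {n : ℕ}
    (hn : n ≠ 0) :
    ∫ t in (0 : ℝ)..2 * π, Real.log ‖1 - q * exp (t * I)‖ * Real.cos (n * t) =
      -(π * (q ^ n).re / n) := by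
  have hbound : ∀ (k : ℕ) (t : ℝ),
      ‖((q * exp (t * I)) ^ k).re / k * Real.cos (n * t)‖ ≤ ‖q‖ ^ k := by
    intro k t
    rw [← Complex.norm_mul_exp_ofReal_mul_I q t, ← norm_pow, Real.norm_eq_abs, abs_mul, abs_div,
      Nat.abs_cast]
    rcases k.eq_zero_or_pos with rfl | hk
    · simp
    calc |((q * exp (t * I)) ^ k).re| / k * |Real.cos (n * t)|
        ≤ |((q * exp (t * I)) ^ k).re| / 1 * 1 := by
          gcongr
          · exact_mod_cast hk
          · exact abs_cos_le_one _
      _ ≤ ‖(q * exp (t * I)) ^ k‖ := by rw [div_one, mul_one]; exact abs_re_le_norm _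
  have hseries : ∀ t : ℝ, HasSum (fun k : ℕ => ((q * exp (t * I)) ^ k).re / k * Real.cos (n * t))
      (-Real.log ‖1 - q * exp (t * I)‖ * Real.cos (n * t)) := fun t =>
    (Complex.hasSum_re_pow_div_neg_log_norm_one_sub
      ((Complex.norm_mul_exp_ofReal_mul_I q t).trans_lt hq)).mul_right _
  have hterms := intervalIntegral.hasSum_integral_of_dominated_convergence (μ := volume)
    (a := 0) (b := 2 * π) (fun k _ => ‖q‖ ^ k)
    (fun k => (by fun_prop : Continuous _).aestronglyMeasurable)
    (fun k => ae_of_all _ fun t _ => hbound k t)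
    (ae_of_all _ fun _ _ => summable_geometric_of_lt_one (norm_nonneg _) hq)
    intervalIntegrable_const (ae_of_all _ fun t _ => hseries t)
  simp_rw [integral_re_mul_exp_ofReal_mul_I_pow_div_mul_cos q _ hn, neg_mul,
    intervalIntegral.integral_neg] at hterms
  rw [← neg_neg (∫ t in (0 : ℝ)..2 * π, _), (hasSum_ite_eq n _).unique hterms]

theorem integral_const_add_log_norm_add_log_norm_mul_cos (c : ℝ) {q₁ q₂ : ℂ} (hq₁ : ‖q₁‖ < 1)
    (hq₂ : ‖q₂‖ < 1) {n : ℕ} (hn : n ≠ 0) :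
    ∫ t in (0 : ℝ)..2 * π, (c + Real.log ‖1 - q₁ * exp (t * I)‖ +
        Real.log ‖1 - q₂ * exp (t * I)‖) * Real.cos (n * t) =
      -(π * (q₁ ^ n + q₂ ^ n).re / n) := by
  have hint : ∀ q : ℂ, ‖q‖ < 1 → IntervalIntegrable
      (fun t : ℝ => Real.log ‖1 - q * exp (t * I)‖ * Real.cos (n * t)) volume 0 (2 * π) :=
    fun q hq => (Continuous.mul (Continuous.log (by fun_prop)
      fun t => norm_ne_zero_iff.2 (Complex.one_sub_mul_exp_ofReal_mul_I_ne_zero hq t))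
      (by fun_prop)).intervalIntegrable _ _
  have hconst : IntervalIntegrable (fun t : ℝ => c * Real.cos (n * t)) volume 0 (2 * π) :=
    (by fun_prop : Continuous _).intervalIntegrable _ _
  have hcos : ∫ t in (0 : ℝ)..2 * π, Real.cos (n * t) = 0 := by
    simpa using integral_cos_int_mul_eq_zero (m := n) (by omega)
  simp_rw [add_mul]
  rw [intervalIntegral.integral_add (hconst.add (hint _ hq₁)) (hint _ hq₂),
    intervalIntegral.integral_add hconst (hint _ hq₁), intervalIntegral.integral_const_mul, hcos,
    integral_log_norm_one_sub_mul_exp_ofReal_mul_I_mul_cos hq₁ hn,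
    integral_log_norm_one_sub_mul_exp_ofReal_mul_I_mul_cos hq₂ hn, add_re]
  ring

theorem Complex.cosh_sub_cosh_eq_exp_mul (ζ ζ' : ℂ) :
    cosh ζ - cosh ζ' = exp ζ / 2 * (1 - exp (ζ' - ζ)) * (1 - exp (-ζ - ζ')) := by
  rw [Complex.cosh, Complex.cosh, exp_sub, exp_sub, exp_neg, exp_neg]
  field_simp
  ring

theorem Complex.cosh_ofReal_add_mul_I_re (a b : ℝ) :
    (cosh (a + b * I)).re = Real.cosh a * Real.cos b := by
  simp [Complex.cosh_add, cosh_mul_I, sinh_mul_I, ← ofReal_cosh, ← ofReal_cos]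

theorem Complex.cosh_ofReal_add_mul_I_im (a b : ℝ) :
    (cosh (a + b * I)).im = Real.sinh a * Real.sin b := by
  simp [Complex.cosh_add, cosh_mul_I, sinh_mul_I, ← ofReal_sinh, ← ofReal_sin]

theorem Complex.exp_ofReal_add_mul_I_pow_re (a b : ℝ) (n : ℕ) :
    (exp (a + b * I) ^ n).re = Real.exp (n * a) * Real.cos (n * b) := by
  rw [← exp_nat_mul, exp_re]
  simp

theorem Complex.norm_one_sub_exp_conj (z : ℂ) : ‖1 - exp (conj z)‖ = ‖1 - exp z‖ := by
  rw [exp_conj, ← norm_conj, map_sub, map_one, conj_conj]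

theorem sqrt_elliptic_eq_abs_mul_norm_cosh_sub_cosh (R₀ ρ ω ρ₀ t : ℝ) :
    √((R₀ * Real.cos ω * Real.cosh ρ - R₀ * Real.cos t * Real.cosh ρ₀) ^ 2 +
        (R₀ * Real.sin ω * Real.sinh ρ - R₀ * Real.sin t * Real.sinh ρ₀) ^ 2) =
      |R₀| * ‖cosh (ρ + ω * I) - cosh (ρ₀ + t * I)‖ := by
  rw [Complex.norm_def, normSq_apply, ← Real.sqrt_sq_eq_abs, ← Real.sqrt_mul (sq_nonneg _)]
  simp only [sub_re, sub_im, Complex.cosh_ofReal_add_mul_I_re, Complex.cosh_ofReal_add_mul_I_im]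
  ring_nf

theorem norm_cosh_sub_cosh_eq (ρ ω ρ₀ t : ℝ) :
    ‖cosh (ρ + ω * I) - cosh (ρ₀ + t * I)‖ =
      Real.exp ρ / 2 * ‖1 - exp (↑(ρ₀ - ρ) + ↑(-ω) * I) * exp (t * I)‖ *
        ‖1 - exp (↑(-(ρ + ρ₀)) + ↑ω * I) * exp (t * I)‖ := by
  rw [Complex.cosh_sub_cosh_eq_exp_mul, norm_mul, norm_mul, norm_div, norm_exp,
    ← Complex.exp_add, ← Complex.exp_add, ← Complex.norm_one_sub_exp_conj (-_ - _)]
  congr 4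
  · simp
  · simp
  · push_cast
    ring_nf
  · simp [map_sub, map_neg, conj_ofReal, conj_I]
    ring

theorem log_dist_elliptic_eq {R₀ ρ₀ ρ : ℝ} (hR : R₀ ≠ 0) (hρ : |ρ₀| < ρ) (ω t : ℝ) :
    Real.log √((R₀ * Real.cos ω * Real.cosh ρ - R₀ * Real.cos t * Real.cosh ρ₀) ^ 2 +
        (R₀ * Real.sin ω * Real.sinh ρ - R₀ * Real.sin t * Real.sinh ρ₀) ^ 2) =
      Real.log (|R₀| / 2) + ρ + Real.log ‖1 - exp (↑(ρ₀ - ρ) + ↑(-ω) * I) * exp (t * I)‖ +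
        Real.log ‖1 - exp (↑(-(ρ + ρ₀)) + ↑ω * I) * exp (t * I)‖ := by
  have hq₁ : ‖exp (↑(ρ₀ - ρ) + ↑(-ω) * I)‖ < 1 := by
    simpa [norm_exp] using (le_abs_self ρ₀).trans_lt hρ
  have hq₂ : ‖exp (↑(-(ρ + ρ₀)) + ↑ω * I)‖ < 1 := by
    simpa [norm_exp] using (neg_le_abs ρ₀).trans_lt hρ
  have hR₂ : |R₀| / 2 ≠ 0 := by simpa using hR
  have h₁ := norm_ne_zero_iff.2 (Complex.one_sub_mul_exp_ofReal_mul_I_ne_zero hq₁ t)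
  have h₂ := norm_ne_zero_iff.2 (Complex.one_sub_mul_exp_ofReal_mul_I_ne_zero hq₂ t)
  have he := Real.exp_ne_zero ρ
  rw [sqrt_elliptic_eq_abs_mul_norm_cosh_sub_cosh, norm_cosh_sub_cosh_eq,
    show ∀ a b c d : ℝ, a * (b / 2 * c * d) = a / 2 * b * c * d by intros; ring,
    Real.log_mul (by positivity) h₂, Real.log_mul (by positivity) h₁, Real.log_mul hR₂ he,
    Real.log_exp]

theorem singleLayer_ellipse_cos_outside_general (R₀ ρ₀ : ℝ) (hR : 0 < R₀) (hρ₀ : 0 < ρ₀)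
    (n : ℕ) (hn : 1 ≤ n)
    (ρ ω : ℝ) (hρgt : ρ₀ < ρ)
    (y₁ y₂ : ℝ)
    (hy₁ : y₁ = R₀ * Real.cos ω * Real.cosh ρ)
    (hy₂ : y₂ = R₀ * Real.sin ω * Real.sinh ρ) :
    (1 / (2 * Real.pi)) *
        ∫ ω' in (0 : ℝ)..(2 * Real.pi),
          Real.log (Real.sqrt ((y₁ - R₀ * Real.cos ω' * Real.cosh ρ₀) ^ 2 +
            (y₂ - R₀ * Real.sin ω' * Real.sinh ρ₀) ^ 2)) * Real.cos ((n : ℝ) * ω')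
      = -((Real.exp ((n : ℝ) * ρ₀) + Real.exp (-((n : ℝ) * ρ₀))) /
            (2 * (n : ℝ) * Real.exp ((n : ℝ) * ρ))) * Real.cos ((n : ℝ) * ω) := by
  subst hy₁ hy₂
  have hn₀ : n ≠ 0 := by omega
  have hq₁ : ‖exp (↑(ρ₀ - ρ) + ↑(-ω) * I)‖ < 1 := by simpa [norm_exp] using hρgt
  have hq₂ : ‖exp (↑(-(ρ + ρ₀)) + ↑ω * I)‖ < 1 := by simp [norm_exp]; linarith
  rw [intervalIntegral.integral_congr fun t _ => by
      rw [log_dist_elliptic_eq hR.ne' (abs_lt.2 ⟨by linarith, hρgt⟩)],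
    integral_const_add_log_norm_add_log_norm_mul_cos _ hq₁ hq₂ hn₀, add_re,
    Complex.exp_ofReal_add_mul_I_pow_re, Complex.exp_ofReal_add_mul_I_pow_re,
    show (n : ℝ) * -ω = -(n * ω) by ring, Real.cos_neg, mul_sub, Real.exp_sub,
    show (n : ℝ) * -(ρ + ρ₀) = -(n * ρ₀) - n * ρ by ring, Real.exp_sub]
  field_simp

/-- For n ≥ 1 and a point y with elliptic coordinates (ρ, ω),
ρ > ρ₀ (outside the ellipse),
(1/2π) ∫₀^{2π} ln|y − x(ω′)| cos(nω′) dω′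
  = −((e^{nρ₀} + e^{−nρ₀})/(2n e^{nρ})) cos(nω). -/
theorem singleLayer_ellipse_cos_outside (R₀ ρ₀ : ℝ) (hR : 0 < R₀) (hρ₀ : 0 < ρ₀)
    (n : ℕ) (hn : 1 ≤ n)
    (ρ ω : ℝ) (hρgt : ρ₀ < ρ) (hω : ω ∈ Set.Ico (0 : ℝ) (2 * Real.pi))
    (y₁ y₂ : ℝ)
    (hy₁ : y₁ = R₀ * Real.cos ω * Real.cosh ρ)
    (hy₂ : y₂ = R₀ * Real.sin ω * Real.sinh ρ) :
    (1 / (2 * Real.pi)) *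
        ∫ ω' in (0 : ℝ)..(2 * Real.pi),
          Real.log (Real.sqrt ((y₁ - R₀ * Real.cos ω' * Real.cosh ρ₀) ^ 2 +
            (y₂ - R₀ * Real.sin ω' * Real.sinh ρ₀) ^ 2)) * Real.cos ((n : ℝ) * ω')
      = -((Real.exp ((n : ℝ) * ρ₀) + Real.exp (-((n : ℝ) * ρ₀))) /
            (2 * (n : ℝ) * Real.exp ((n : ℝ) * ρ))) * Real.cos ((n : ℝ) * ω) :=
  singleLayer_ellipse_cos_outside_general R₀ ρ₀ hR hρ₀ n hn ρ ω hρgt y₁ y₂ hy₁ hy₂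
end

section
/- For every integer n ≥ 1, the conormal derivative dφ_{2,n}(ω) = (d/dω)(sin(nω)/Ξ(ω)) / Ξ(ω) of the Neumann–Poincaré eigenfunction φ_{2,n}(ω) = sin(nω)/Ξ(ω) attains its maximum absolute value over [0, 2π) at ω = 0 and ω = π (the two high-curvature points of the ellipse), with |dφ_{2,n}(0)| = |dφ_{2,n}(π)| = n/(R₀² sinh² ρ₀). Moreover, for fixed R₀ and n this maximum value tends to +∞ as ρ₀ → 0⁺, i.e. as the maximal curvature κ_max = cosh ρ₀/(R₀ sinh² ρ₀) tends to +∞. -/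
/-!
Writing `q = c² + sin² ω` for `c = sinh ρ₀`, the quotient rule gives the closed form
`dφ(ω) = (n cos(nω) q - sin(nω) sin ω cos ω) / (R₀² q²)`.
Since `|sin(nω)| ≤ n |sin ω|`, the numerator is at most `n (q + sin² ω)` in absolute value, and
`(q + sin² ω) c² ≤ q²`; hence `|dφ| ≤ n / (R₀² c²)`, with equality where `sin ω = 0`.
-/

open Filter Real

theorem abs_sin_nat_mul_le (n : ℕ) (x : ℝ) : |sin (n * x)| ≤ n * |sin x| := by
  induction n with
  | zero => simp
  | succ m ih =>
    have hsin_cos : |sin (m * x) * cos x| ≤ m * |sin x| := by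
      rw [abs_mul]
      exact (mul_le_of_le_one_right (abs_nonneg _) (abs_cos_le_one x)).trans ih
    have hcos_sin : |cos (m * x) * sin x| ≤ |sin x| := by
      rw [abs_mul]
      exact mul_le_of_le_one_left (abs_nonneg _) (abs_cos_le_one _)
    push_cast
    rw [add_one_mul, sin_add]
    linarith [abs_add_le (sin (m * x) * cos x) (cos (m * x) * sin x)]

/-- The speed `|x'(ω)|` of the parametrization `ω ↦ (R cosh ρ cos ω, R sinh ρ sin ω)`,
with `c = sinh ρ`. -/
noncomputable def ellipseSpeed (R c ω : ℝ) : ℝ := R * √(c ^ 2 + sin ω ^ 2)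

/-- Closed form of the conormal derivative of `ω ↦ sin (k ω) / ellipseSpeed R c ω`. -/
noncomputable def conormalDerivSinMode (R c k ω : ℝ) : ℝ :=
  (k * cos (k * ω) * (c ^ 2 + sin ω ^ 2) - sin (k * ω) * sin ω * cos ω) /
    (R ^ 2 * (c ^ 2 + sin ω ^ 2) ^ 2)

section

variable {R c : ℝ}

theorem hasDerivAt_ellipseSpeed (hc : c ≠ 0) (ω : ℝ) :
    HasDerivAt (ellipseSpeed R c) (R * (sin ω * cos ω / √(c ^ 2 + sin ω ^ 2))) ω := by
  have hq : c ^ 2 + sin ω ^ 2 ≠ 0 := by positivity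
  have hinner : HasDerivAt (fun ω => c ^ 2 + sin ω ^ 2) (2 * sin ω * cos ω) ω :=
    (((hasDerivAt_sin ω).pow 2).const_add _).congr_deriv (by ring)
  exact (((hasDerivAt_sqrt hq).comp ω hinner).const_mul R).congr_deriv (by field_simp)

theorem deriv_sin_mul_div_ellipseSpeed_div (hR : R ≠ 0) (hc : c ≠ 0) (k ω : ℝ) :
    deriv (fun ω => sin (k * ω) / ellipseSpeed R c ω) ω / ellipseSpeed R c ω =
      conormalDerivSinMode R c k ω := by
  have hq : 0 < c ^ 2 + sin ω ^ 2 := by positivity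
  have hsqrt : √(c ^ 2 + sin ω ^ 2) ≠ 0 := (sqrt_pos.2 hq).ne'
  have hnum : HasDerivAt (fun ω => sin (k * ω)) (k * cos (k * ω)) ω :=
    ((hasDerivAt_sin _).comp ω ((hasDerivAt_id ω).const_mul k)).congr_deriv (by simp [mul_comm])
  have hquot : HasDerivAt (fun ω => sin (k * ω) / ellipseSpeed R c ω) _ ω :=
    hnum.div (hasDerivAt_ellipseSpeed hc ω) (mul_ne_zero hR hsqrt)
  have hsqrt_sq := sq_sqrt hq.le
  rw [hquot.deriv, conormalDerivSinMode, ellipseSpeed]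
  generalize √(c ^ 2 + sin ω ^ 2) = r at hsqrt hsqrt_sq ⊢
  rw [← hsqrt_sq]
  field_simp

theorem abs_conormalDerivSinMode_le (hR : R ≠ 0) (hc : c ≠ 0) (n : ℕ) (ω : ℝ) :
    |conormalDerivSinMode R c n ω| ≤ n / (R ^ 2 * c ^ 2) := by
  set q := c ^ 2 + sin ω ^ 2 with hq_def
  have hq : 0 < q := by positivity
  have hnum : |n * cos (n * ω) * q - sin (n * ω) * sin ω * cos ω| ≤ n * (q + sin ω ^ 2) := by
    have hfirst : |n * cos (n * ω) * q| ≤ n * q := by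
      rw [abs_mul, abs_mul, Nat.abs_cast, abs_of_pos hq]
      exact mul_le_mul_of_nonneg_right
        (mul_le_of_le_one_right (Nat.cast_nonneg n) (abs_cos_le_one _)) hq.le
    have hsecond : |sin (n * ω) * sin ω * cos ω| ≤ n * sin ω ^ 2 :=
      calc |sin (n * ω) * sin ω * cos ω|
          ≤ n * |sin ω| * |sin ω| * 1 := by
            rw [abs_mul, abs_mul]
            gcongr
            exacts [abs_sin_nat_mul_le n ω, abs_cos_le_one ω]
        _ = n * sin ω ^ 2 := by rw [← sq_abs]; ring
    linarith [abs_sub _ _ |>.trans (add_le_add hfirst hsecond)]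
  have hsq : (q + sin ω ^ 2) * c ^ 2 ≤ q ^ 2 := by nlinarith [pow_nonneg (sq_nonneg (sin ω)) 2]
  rw [conormalDerivSinMode, ← hq_def, abs_div, abs_of_pos (by positivity : 0 < R ^ 2 * q ^ 2),
    div_le_div_iff₀ (by positivity) (by positivity)]
  calc |n * cos (n * ω) * q - sin (n * ω) * sin ω * cos ω| * (R ^ 2 * c ^ 2)
      ≤ n * (q + sin ω ^ 2) * (R ^ 2 * c ^ 2) := by gcongr
    _ = n * R ^ 2 * ((q + sin ω ^ 2) * c ^ 2) := by ring
    _ ≤ n * R ^ 2 * q ^ 2 := by gcongr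
    _ = n * (R ^ 2 * q ^ 2) := by ring

theorem conormalDerivSinMode_of_sin_eq_zero (hR : R ≠ 0) (hc : c ≠ 0) (k : ℝ) {ω : ℝ}
    (hω : sin ω = 0) : conormalDerivSinMode R c k ω = k * cos (k * ω) / (R ^ 2 * c ^ 2) := by
  rw [conormalDerivSinMode, hω]
  field_simp
  ring

end

theorem tendsto_div_mul_sinh_sq_nhdsGT_zero {a b : ℝ} (ha : 0 < a) (hb : 0 < b) :
    Tendsto (fun r => a / (b * sinh r ^ 2)) (nhdsWithin 0 (Set.Ioi 0)) atTop := by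
  have hden : Tendsto (fun r => b * sinh r ^ 2) (nhdsWithin 0 (Set.Ioi 0))
      (nhdsWithin 0 (Set.Ioi 0)) := by
    refine tendsto_nhdsWithin_of_tendsto_nhds_of_eventually_within _ ?_ ?_
    · have hcont : Continuous fun r => b * sinh r ^ 2 := by fun_prop
      simpa using (hcont.tendsto 0).mono_left nhdsWithin_le_nhds
    · filter_upwards [self_mem_nhdsWithin] with r hr
      have : 0 < sinh r := sinh_pos_iff.2 hr
      exact Set.mem_Ioi.2 (by positivity)
  simpa only [div_eq_mul_inv, Pi.inv_apply] using hden.inv_tendsto_nhdsGT_zero.const_mul_atTop ha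

/-- For every integer n ≥ 1, the conormal derivative
dφ_{2,n}(ω) = (d/dω)(sin(nω)/Ξ(ω))/Ξ(ω) of the Neumann–Poincaré eigenfunction
φ_{2,n}(ω) = sin(nω)/Ξ(ω) attains its maximum absolute value over [0, 2π) at
ω = 0 and ω = π, with |dφ_{2,n}(0)| = |dφ_{2,n}(π)| = n/(R₀² sinh² ρ₀), and for
fixed R₀ and n this maximum value tends to +∞ as ρ₀ → 0⁺. -/
theorem conormal_derivative_max_blowup (R₀ ρ₀ : ℝ) (hR : 0 < R₀) (hρ : 0 < ρ₀)
    (n : ℕ) (hn : 1 ≤ n)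
    (Ξ φ d : ℝ → ℝ)
    (hΞ : Ξ = fun ω => R₀ * Real.sqrt ((Real.sinh ρ₀) ^ 2 + (Real.sin ω) ^ 2))
    (hφ : φ = fun ω => Real.sin ((n : ℝ) * ω) / Ξ ω)
    (hd : d = fun ω => deriv φ ω / Ξ ω) :
    (∀ ω ∈ Set.Ico (0 : ℝ) (2 * Real.pi),
        |d ω| ≤ (n : ℝ) / (R₀ ^ 2 * (Real.sinh ρ₀) ^ 2)) ∧
    |d 0| = (n : ℝ) / (R₀ ^ 2 * (Real.sinh ρ₀) ^ 2) ∧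
    |d Real.pi| = (n : ℝ) / (R₀ ^ 2 * (Real.sinh ρ₀) ^ 2) ∧
    Tendsto (fun r : ℝ => (n : ℝ) / (R₀ ^ 2 * (Real.sinh r) ^ 2))
      (nhdsWithin 0 (Set.Ioi 0)) atTop := by
  have hs : sinh ρ₀ ≠ 0 := (sinh_pos_iff.2 hρ).ne'
  have hd_eq : ∀ ω, d ω = conormalDerivSinMode R₀ (sinh ρ₀) n ω := by
    subst hΞ hφ hd
    exact deriv_sin_mul_div_ellipseSpeed_div hR.ne' hs n
  have hextremal : ∀ ω, sin ω = 0 → |cos (n * ω)| = 1 →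
      |d ω| = n / (R₀ ^ 2 * sinh ρ₀ ^ 2) := fun ω hsin hcos => by
    rw [hd_eq, conormalDerivSinMode_of_sin_eq_zero hR.ne' hs _ hsin, abs_div, abs_mul, hcos,
      Nat.abs_cast, mul_one, abs_of_pos (by positivity)]
  refine ⟨fun ω _ => hd_eq ω ▸ abs_conormalDerivSinMode_le hR.ne' hs n ω,
    hextremal 0 sin_zero (by simp), hextremal π sin_pi (by exact_mod_cast abs_cos_int_mul_pi n),
    tendsto_div_mul_sinh_sq_nhdsGT_zero (by exact_mod_cast hn) (by positivity)⟩
end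

section
/- For every integer n ≥ 1, the conormal derivative along the ellipse of the boundary restriction of the single-layer potential of φ_{2,n}, namely the function g(ω) = (d/dω)( −((e^{nρ₀} + e^{−nρ₀})/(2n e^{nρ₀})) sin(nω) ) / Ξ(ω) = −((e^{nρ₀} + e^{−nρ₀})/(2 e^{nρ₀})) · cos(nω)/Ξ(ω), attains its maximum absolute value over [0, 2π) exactly at ω = 0 and ω = π, the two high-curvature points of the ellipse, with maximum value ((e^{nρ₀} + e^{−nρ₀})/(2 e^{nρ₀})) · (1/(R₀ sinh ρ₀)). -/
/-!
After differentiating, `g ω = -C cos (n ω) / Ξ ω` with `C > 0`. The speed `Ξ ω = R₀ √(sinh² ρ₀ + sin² ω)`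
is bounded below by `R₀ sinh ρ₀`, with equality exactly where `sin ω = 0`, and `|cos (n ω)| ≤ 1`.
So `|g ω| ≤ C / (R₀ sinh ρ₀)`, and equality forces `sin ω = 0`, i.e. `ω ∈ {0, π}` on `[0, 2π)`;
conversely `sin ω = 0` makes `ω` a multiple of `π`, so `|cos (n ω)| = 1` there automatically.
-/

open Real Set

theorem deriv_const_mul_sin_mul (a c x : ℝ) :
    deriv (fun y => a * sin (c * y)) x = a * c * cos (c * x) := by
  have h : HasDerivAt (fun y => c * y) c x := by
    simpa using (hasDerivAt_id x).const_mul c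
  rw [((h.sin).const_mul a).deriv]
  ring

theorem abs_cos_int_mul_of_sin_eq_zero {x : ℝ} (k : ℤ) (hx : sin x = 0) :
    |cos (k * x)| = 1 := by
  obtain ⟨j, rfl⟩ := sin_eq_zero_iff.mp hx
  rw [← mul_assoc, ← Int.cast_mul]
  exact abs_cos_int_mul_pi _

theorem sin_eq_zero_iff_of_mem_Ico {x : ℝ} (hx : x ∈ Ico 0 (2 * π)) :
    sin x = 0 ↔ x = 0 ∨ x = π := by
  rcases hx.1.eq_or_lt with rfl | hpos
  · simp
  have hshift : sin (x - π) = 0 ↔ x - π = 0 :=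
    sin_eq_zero_iff_of_lt_of_lt (by linarith) (by linarith [hx.2])
  rw [sin_sub_pi, neg_eq_zero, sub_eq_zero] at hshift
  rw [hshift]
  exact ⟨Or.inr, fun h => h.resolve_left hpos.ne'⟩

theorem le_sqrt_sq_add_sq (s t : ℝ) : s ≤ √(s ^ 2 + t ^ 2) :=
  le_sqrt_of_sq_le (le_add_of_nonneg_right (sq_nonneg t))

theorem sqrt_sq_add_sq_eq_iff {s t : ℝ} (hs : 0 ≤ s) : √(s ^ 2 + t ^ 2) = s ↔ t = 0 := by
  rw [sqrt_eq_iff_eq_sq (by positivity) hs, add_eq_left, sq_eq_zero_iff]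

theorem div_le_one_div_of_le {a d m : ℝ} (ha : a ≤ 1) (hm : 0 < m) (hd : m ≤ d) :
    a / d ≤ 1 / m :=
  (div_le_div_of_nonneg_right ha (hm.trans_le hd).le).trans (one_div_le_one_div_of_le hm hd)

theorem div_eq_one_div_iff {a d m : ℝ} (ha : a ≤ 1) (hm : 0 < m) (hd : m ≤ d) :
    a / d = 1 / m ↔ a = 1 ∧ d = m := by
  have hd0 : 0 < d := hm.trans_le hd
  constructor
  · intro h
    rw [div_eq_div_iff hd0.ne' hm.ne', one_mul] at h
    have ha1 : a = 1 := by nlinarith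
    exact ⟨ha1, by rw [← h, ha1, one_mul]⟩
  · rintro ⟨rfl, rfl⟩
    rfl

/-- For every integer n ≥ 1, the conormal derivative along the
ellipse of the boundary restriction of the single-layer potential of φ_{2,n},
g(ω) = (d/dω)(−((e^{nρ₀}+e^{−nρ₀})/(2n e^{nρ₀})) sin(nω))/Ξ(ω)
     = −((e^{nρ₀}+e^{−nρ₀})/(2 e^{nρ₀})) cos(nω)/Ξ(ω),
attains its maximum absolute value over [0, 2π) exactly at ω = 0 and ω = π,
with maximum value ((e^{nρ₀}+e^{−nρ₀})/(2 e^{nρ₀}))·(1/(R₀ sinh ρ₀)). -/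
theorem conormal_singleLayer_max_at_high_curvature (R₀ ρ₀ : ℝ) (hR : 0 < R₀)
    (hρ : 0 < ρ₀) (n : ℕ) (hn : 1 ≤ n)
    (Ξ g : ℝ → ℝ)
    (hΞ : Ξ = fun ω => R₀ * Real.sqrt ((Real.sinh ρ₀) ^ 2 + (Real.sin ω) ^ 2))
    (hg : g = fun ω =>
      deriv (fun ω' => -((Real.exp ((n : ℝ) * ρ₀) + Real.exp (-((n : ℝ) * ρ₀))) /
          (2 * (n : ℝ) * Real.exp ((n : ℝ) * ρ₀))) * Real.sin ((n : ℝ) * ω')) ω / Ξ ω) :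
    (∀ ω : ℝ, g ω =
        -((Real.exp ((n : ℝ) * ρ₀) + Real.exp (-((n : ℝ) * ρ₀))) /
            (2 * Real.exp ((n : ℝ) * ρ₀))) * Real.cos ((n : ℝ) * ω) / Ξ ω) ∧
    ∀ ω ∈ Set.Ico (0 : ℝ) (2 * Real.pi),
      |g ω| ≤ (Real.exp ((n : ℝ) * ρ₀) + Real.exp (-((n : ℝ) * ρ₀))) /
          (2 * Real.exp ((n : ℝ) * ρ₀)) * (1 / (R₀ * Real.sinh ρ₀)) ∧
      (|g ω| = (Real.exp ((n : ℝ) * ρ₀) + Real.exp (-((n : ℝ) * ρ₀))) /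
          (2 * Real.exp ((n : ℝ) * ρ₀)) * (1 / (R₀ * Real.sinh ρ₀)) ↔
        ω = 0 ∨ ω = Real.pi) := by
  set C := (exp (n * ρ₀) + exp (-(n * ρ₀))) / (2 * exp (n * ρ₀)) with hC
  have hn0 : (n : ℝ) ≠ 0 := by positivity
  have hg_eq : ∀ ω, g ω = -C * cos (n * ω) / Ξ ω := by
    intro ω
    simp only [hg]
    rw [deriv_const_mul_sin_mul, hC]
    field_simp
  have hm : 0 < R₀ * sinh ρ₀ := mul_pos hR (sinh_pos_iff.mpr hρ)
  have hΞ_ge (ω : ℝ) : R₀ * sinh ρ₀ ≤ Ξ ω := by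
    rw [hΞ]
    exact mul_le_mul_of_nonneg_left (le_sqrt_sq_add_sq _ _) hR.le
  have hΞ_eq_iff (ω : ℝ) : Ξ ω = R₀ * sinh ρ₀ ↔ sin ω = 0 := by
    rw [hΞ, mul_right_inj' hR.ne', sqrt_sq_add_sq_eq_iff (sinh_pos_iff.mpr hρ).le]
  have habs (ω : ℝ) : |g ω| = C * (|cos (n * ω)| / Ξ ω) := by
    rw [hg_eq, abs_div, abs_mul, abs_neg, abs_of_pos (by positivity : 0 < C),
      abs_of_pos (hm.trans_le (hΞ_ge ω)), mul_div_assoc]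
  refine ⟨hg_eq, fun ω hω => ⟨?_, ?_⟩⟩
  · rw [habs]
    exact mul_le_mul_of_nonneg_left (div_le_one_div_of_le (abs_cos_le_one _) hm (hΞ_ge ω))
      (by positivity)
  · rw [habs, mul_right_inj' (by positivity), div_eq_one_div_iff (abs_cos_le_one _) hm (hΞ_ge ω),
      hΞ_eq_iff, ← sin_eq_zero_iff_of_mem_Ico hω]
    refine ⟨And.right, fun h => ⟨?_, h⟩⟩
    exact_mod_cast abs_cos_int_mul_of_sin_eq_zero n h
end
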